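/- arXiv:0812.4699 — 4 statements merged into one kernel-verified Lean document; each statement's English description precedes it below -/
import Mathlib

section
/- Let n, K ≥ 1 and let B : ℝ → M_{n×K}(ℝ) be a matrix-valued function differentiable at t₀ with derivative Ḃ = B'(t₀), and suppose B(t₀)ᵀ B(t₀) is invertible. Then the projection-matrix-valued function P(t) = B(t) (B(t)ᵀ B(t))^{-1} B(t)ᵀ is differentiable at t₀ with derivative P'(t₀) = (I − P(t₀)) Ḃ M B(t₀)ᵀ + B(t₀) M Ḃᵀ (I − P(t₀)), where M = (B(t₀)ᵀ B(t₀))^{-1} and I is the n×n identity matrix. -/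
/-!
By the product rule and `(A⁻¹)' = -A⁻¹ A' A⁻¹` for the Gram matrix `A = BᵀB`,
`P' = Ḃ M Bᵀ - B M (ḂᵀB + BᵀḂ) M Bᵀ + B M Ḃᵀ`; since `B M Bᵀ = P(t₀)`, the middle term is
`-P Ḃ M Bᵀ - B M Ḃᵀ P`, which regroups into `Q Ḃ M Bᵀ + B M Ḃᵀ Q`.
-/

open Matrix

section MatrixCalculus

variable {𝕜 : Type*} [NontriviallyNormedField 𝕜] {m n p : Type*} [Fintype n] {t : 𝕜}

theorem hasDerivAt_matrix_iff {X : 𝕜 → Matrix m n 𝕜} {X' : Matrix m n 𝕜} :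
    HasDerivAt X X' t ↔ ∀ i j, HasDerivAt (fun s => X s i j) (X' i j) t :=
  hasDerivAt_pi.trans (forall_congr' fun _ => hasDerivAt_pi)

theorem HasDerivAt.matrix_transpose [Fintype m] {X : 𝕜 → Matrix m n 𝕜} {X' : Matrix m n 𝕜}
    (hX : HasDerivAt X X' t) : HasDerivAt (fun s => (X s)ᵀ) X'ᵀ t :=
  hasDerivAt_matrix_iff.2 fun i j => hasDerivAt_matrix_iff.1 hX j i

theorem HasDerivAt.matrix_mul [Fintype p] {X : 𝕜 → Matrix m n 𝕜} {Y : 𝕜 → Matrix n p 𝕜}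
    {X' : Matrix m n 𝕜} {Y' : Matrix n p 𝕜} (hX : HasDerivAt X X' t) (hY : HasDerivAt Y Y' t) :
    HasDerivAt (fun s => X s * Y s) (X' * Y t + X t * Y') t := by
  rw [hasDerivAt_matrix_iff] at hX hY ⊢
  intro i j
  simp only [mul_apply, Matrix.add_apply, ← Finset.sum_add_distrib]
  exact HasDerivAt.fun_sum fun k _ => (hX i k).mul (hY k j)

/-- Under any submultiplicative norm the matrices form a complete normed algebra, in which
`Ring.inverse` (the nonsingular inverse) has derivative `h ↦ -x⁻¹ * h * x⁻¹` at a unit `x`. -/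
theorem HasDerivAt.matrix_inv [CompleteSpace 𝕜] [DecidableEq n] {X : 𝕜 → Matrix n n 𝕜}
    {X' : Matrix n n 𝕜} (hX : HasDerivAt X X' t) (hdet : IsUnit (X t).det) :
    HasDerivAt (fun s => (X s)⁻¹) (-((X t)⁻¹ * X' * (X t)⁻¹)) t := by
  let _ : NormedRing (Matrix n n 𝕜) := Matrix.linftyOpNormedRing
  let _ : NormedAlgebra 𝕜 (Matrix n n 𝕜) := Matrix.linftyOpNormedAlgebra
  have : HasSummableGeomSeries (Matrix n n 𝕜) :=
    @instHasSummableGeomSeriesOfCompleteSpace _ _ (FiniteDimensional.complete 𝕜 _)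
  obtain ⟨u, hu⟩ := (isUnit_iff_isUnit_det _).2 hdet
  have hinv := hasFDerivAt_ringInverse (𝕜 := 𝕜) u
  rw [hu] at hinv
  simp only [nonsing_inv_eq_ringInverse, ← hu, Ring.inverse_unit]
  exact hinv.comp_hasDerivAt t hX

end MatrixCalculus

theorem projection_matrix_derivative_general
    (n K : ℕ) (t₀ : ℝ)
    (B : ℝ → Matrix (Fin n) (Fin K) ℝ) (Bd : Matrix (Fin n) (Fin K) ℝ)
    (hB : ∀ i j, HasDerivAt (fun t => B t i j) (Bd i j) t₀)
    (hinv : IsUnit ((B t₀)ᵀ * B t₀).det)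
    (M : Matrix (Fin K) (Fin K) ℝ) (hM : M = ((B t₀)ᵀ * B t₀)⁻¹)
    (P : ℝ → Matrix (Fin n) (Fin n) ℝ)
    (hP : ∀ t, P t = B t * ((B t)ᵀ * B t)⁻¹ * (B t)ᵀ)
    (Q : Matrix (Fin n) (Fin n) ℝ) (hQ : Q = 1 - P t₀) :
    ∀ i j, HasDerivAt (fun t => P t i j)
      ((Q * Bd * M * (B t₀)ᵀ + B t₀ * M * Bdᵀ * Q) i j) t₀ := by
  obtain rfl : P = _ := funext hP
  subst hQ hM
  rw [← hasDerivAt_matrix_iff] at hB ⊢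
  have hGram := hB.matrix_transpose.matrix_mul hB
  convert (hB.matrix_mul (hGram.matrix_inv hinv)).matrix_mul hB.matrix_transpose using 1
  simp only [Matrix.mul_add, Matrix.add_mul, Matrix.mul_neg, Matrix.neg_mul, Matrix.mul_sub,
    Matrix.sub_mul, Matrix.mul_one, Matrix.one_mul, Matrix.mul_assoc]
  abel

/-- Derivative of the orthogonal projection matrix
`P(t) = B(t) (B(t)ᵀ B(t))⁻¹ B(t)ᵀ` (entrywise differentiability). -/
theorem projection_matrix_derivative
    (n K : ℕ) (hn : 1 ≤ n) (hK : 1 ≤ K) (t₀ : ℝ)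
    (B : ℝ → Matrix (Fin n) (Fin K) ℝ) (Bd : Matrix (Fin n) (Fin K) ℝ)
    (hB : ∀ i j, HasDerivAt (fun t => B t i j) (Bd i j) t₀)
    (hinv : IsUnit ((B t₀)ᵀ * B t₀).det)
    (M : Matrix (Fin K) (Fin K) ℝ) (hM : M = ((B t₀)ᵀ * B t₀)⁻¹)
    (P : ℝ → Matrix (Fin n) (Fin n) ℝ)
    (hP : ∀ t, P t = B t * ((B t)ᵀ * B t)⁻¹ * (B t)ᵀ)
    (Q : Matrix (Fin n) (Fin n) ℝ) (hQ : Q = 1 - P t₀) :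
    ∀ i j, HasDerivAt (fun t => P t i j)
      ((Q * Bd * M * (B t₀)ᵀ + B t₀ * M * Bdᵀ * Q) i j) t₀ :=
  projection_matrix_derivative_general n K t₀ B Bd hB hinv M hM P hP Q hQ
end

section
/- Let d ≥ 1 be an integer, a > 0, and let μ be the uniform probability measure on the closed Euclidean ball B_a^d = {x ∈ ℝ^d : ‖x‖ ≤ a} (Lebesgue measure restricted to the ball and normalized by its volume). Then for every unit vector θ ∈ ℝ^d, the pushforward of μ under the map x ↦ ⟨x, θ⟩ is absolutely continuous with respect to Lebesgue measure on ℝ with density f_d, i.e. for every Borel set A ⊆ ℝ, μ({x : ⟨x,θ⟩ ∈ A}) = ∫_A (c_d/a)(1 − ν²/a²)^{(d−1)/2} · 1_{[−a,a]}(ν) dν. -/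
/-!
Take an orthonormal basis whose first vector is `θ`. In these coordinates `⟪x, θ⟫` is the first
coordinate, so by Fubini the volume of `{‖x‖ ≤ a, ⟪x, θ⟫ ∈ A}` is the integral over `ν ∈ A` of the
volume of the `(d-1)`-ball of radius `√(a² - ν²)`, namely `ω_{d-1} (a² - ν²)^{(d-1)/2}`.
Dividing by the volume `ω_d a^d` of the ball gives `f_d`, because Legendre's duplication formula
turns `c_d` into `ω_{d-1} / ω_d`.
-/

open MeasureTheory ProbabilityTheory Real Metric Module
open scoped RealInnerProductSpace

noncomputable def unitBallVolume (n : ℕ) : ℝ := √π ^ n / Gamma (n / 2 + 1)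

theorem unitBallVolume_pos (n : ℕ) : 0 < unitBallVolume n :=
  div_pos (pow_pos (sqrt_pos.2 pi_pos) n) (Gamma_pos_of_pos (by positivity))

theorem unitBallVolume_div_unitBallVolume_succ (n : ℕ) :
    unitBallVolume n / unitBallVolume (n + 1) =
      Gamma ((↑(n + 1) : ℝ) + 1) / (Gamma (((↑(n + 1) : ℝ) + 1) / 2) ^ 2 * 2 ^ (n + 1)) := by
  have hdup : Gamma (n / 2 + 1) * Gamma (n / 2 + 3 / 2) * 2 ^ (n + 1) = Gamma (n + 2) * √π := by
    have h := Gamma_mul_Gamma_add_half ((n : ℝ) / 2 + 1)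
    have h2 : (2 : ℝ) ^ (1 - ((n : ℝ) + 2)) * 2 ^ (n + 1) = 1 := by
      rw [← rpow_natCast, ← rpow_add zero_lt_two]; push_cast; ring_nf; exact rpow_zero 2
    rw [show (n : ℝ) / 2 + 1 + 1 / 2 = n / 2 + 3 / 2 by ring,
      show 2 * ((n : ℝ) / 2 + 1) = n + 2 by ring] at h
    linear_combination (2 : ℝ) ^ (n + 1) * h + Gamma (n + 2) * √π * h2
  have := Gamma_pos_of_pos (show (0 : ℝ) < n / 2 + 1 by positivity)
  have := Gamma_pos_of_pos (show (0 : ℝ) < n / 2 + 3 / 2 by positivity)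
  simp only [unitBallVolume]
  push_cast
  rw [show ((n : ℝ) + 1) / 2 + 1 = n / 2 + 3 / 2 by ring, show (n : ℝ) + 1 + 1 = n + 2 by ring,
    show ((n : ℝ) + 2) / 2 = n / 2 + 1 by ring]
  field_simp
  rw [show ((n : ℝ) + 2) / 2 = n / 2 + 1 by ring, show ((n : ℝ) + 3) / 2 = n / 2 + 3 / 2 by ring]
  linear_combination √π ^ n * hdup

/-- The paper's `f_{m+1}`: the density of `⟪x, θ⟫` for `x` uniform on the `a`-ball in dimension
`m + 1`, with `c_{m+1}` written as `ω_m / ω_{m+1}`, where `ω_n = unitBallVolume n`. -/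
noncomputable def ballMarginalDensity (m : ℕ) (a : ℝ) : ℝ → ℝ :=
  (Set.Icc (-a) a).indicator fun ν ↦
    unitBallVolume m / unitBallVolume (m + 1) / a * (1 - ν ^ 2 / a ^ 2) ^ ((m : ℝ) / 2)

theorem ballMarginalDensity_nonneg (m : ℕ) (a ν : ℝ) : 0 ≤ ballMarginalDensity m a ν := by
  refine Set.indicator_nonneg (fun ν hν ↦ ?_) ν
  have ha : 0 ≤ a := by linarith [hν.1, hν.2]
  have hν2 : ν ^ 2 / a ^ 2 ≤ 1 := div_le_one_of_le₀ (sq_le_sq' hν.1 hν.2) (by positivity)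
  have := unitBallVolume_pos m
  have := unitBallVolume_pos (m + 1)
  exact mul_nonneg (by positivity) (rpow_nonneg (by linarith) _)

theorem measurable_ballMarginalDensity (m : ℕ) (a : ℝ) : Measurable (ballMarginalDensity m a) :=
  Measurable.indicator (by fun_prop) measurableSet_Icc

variable {E : Type*} [NormedAddCommGroup E] [InnerProductSpace ℝ E] [FiniteDimensional ℝ E]
  [MeasurableSpace E] [BorelSpace E]

theorem volume_closedBall_eq_ofReal (x : E) {r : ℝ} (hr : 0 ≤ r) :
    volume (closedBall x r) = ENNReal.ofReal (r ^ finrank ℝ E * unitBallVolume (finrank ℝ E)) := by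
  rcases subsingleton_or_nontrivial E with hE | hE
  · have hb := (stdOrthonormalBasis ℝ E).volume_parallelepiped
    rw [Subsingleton.eq_univ_of_nonempty ⟨0, (mem_parallelepiped_iff _ _).2 ⟨0, by simp, by simp⟩⟩]
      at hb
    simp [Subsingleton.eq_univ_of_nonempty (nonempty_closedBall.2 hr), hb, unitBallVolume,
      finrank_zero_of_subsingleton]
  · rw [InnerProductSpace.volume_closedBall, ENNReal.ofReal_mul (by positivity),
      ENNReal.ofReal_pow hr, unitBallVolume]

theorem volume_slice_eq_mul_ballMarginalDensity (m : ℕ) {a : ℝ} (ha : 0 < a) (ν : ℝ) :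
    volume {z : EuclideanSpace ℝ (Fin m) | ν ^ 2 + ‖z‖ ^ 2 ≤ a ^ 2} =
      ENNReal.ofReal (a ^ (m + 1) * unitBallVolume (m + 1)) *
        ENNReal.ofReal (ballMarginalDensity m a ν) := by
  by_cases hν : ν ∈ Set.Icc (-a) a
  · have hν2 : ν ^ 2 ≤ a ^ 2 := sq_le_sq' hν.1 hν.2
    have hslice : {z : EuclideanSpace ℝ (Fin m) | ν ^ 2 + ‖z‖ ^ 2 ≤ a ^ 2} =
        closedBall 0 √(a ^ 2 - ν ^ 2) := by
      ext z
      rw [Set.mem_ofPred_eq, mem_closedBall_zero_iff, le_sqrt (norm_nonneg z) (by linarith)]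
      constructor <;> intro h <;> linarith
    have hsqrt : (1 - ν ^ 2 / a ^ 2) ^ ((m : ℝ) / 2) = (√(a ^ 2 - ν ^ 2) / a) ^ m := by
      rw [rpow_div_two_eq_sqrt _ (by rw [sub_nonneg]; exact div_le_one_of_le₀ hν2 (by positivity)),
        rpow_natCast, show 1 - ν ^ 2 / a ^ 2 = (a ^ 2 - ν ^ 2) / a ^ 2 by field_simp,
        sqrt_div' _ (by positivity), sqrt_sq ha.le]
    have := unitBallVolume_pos (m + 1)
    rw [hslice, volume_closedBall_eq_ofReal _ (sqrt_nonneg _), finrank_euclideanSpace_fin,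
      ballMarginalDensity, Set.indicator_of_mem hν, hsqrt, ← ENNReal.ofReal_mul (by positivity)]
    congr 1
    rw [div_pow]
    field_simp
    ring
  · have hslice : {z : EuclideanSpace ℝ (Fin m) | ν ^ 2 + ‖z‖ ^ 2 ≤ a ^ 2} = ∅ := by
      refine Set.eq_empty_of_forall_notMem fun z hz ↦ hν (abs_le_of_sq_le_sq' ?_ ha.le)
      linarith [hz.out, sq_nonneg ‖z‖]
    rw [hslice, ballMarginalDensity, Set.indicator_of_notMem hν]
    simp

theorem exists_measurePreserving_inner_prod {m : ℕ} (hE : finrank ℝ E = m + 1) {θ : E}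
    (hθ : ‖θ‖ = 1) :
    ∃ φ : E → ℝ × EuclideanSpace ℝ (Fin m), MeasurePreserving φ ∧
      ∀ x, (φ x).1 = ⟪x, θ⟫ ∧ ‖x‖ ^ 2 = (φ x).1 ^ 2 + ‖(φ x).2‖ ^ 2 := by
  have hon : Orthonormal ℝ (Set.domRestrict {(0 : Fin (m + 1))} fun _ ↦ θ) :=
    ⟨fun _ ↦ hθ, fun i j hij ↦ absurd (Subtype.ext (i.2.trans j.2.symm)) hij⟩
  obtain ⟨b, hb⟩ := hon.exists_orthonormalBasis_extension_of_card_eq (by simpa using hE)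
  refine ⟨Prod.map id (WithLp.toLp 2) ∘ MeasurableEquiv.piFinSuccAbove (fun _ ↦ ℝ) 0 ∘
      WithLp.ofLp ∘ b.repr, ?_, fun x ↦ ⟨?_, ?_⟩⟩
  · exact (MeasurePreserving.id volume |>.prod (PiLp.volume_preserving_toLp _)).comp <|
      (volume_preserving_piFinSuccAbove _ 0).comp <|
      (PiLp.volume_preserving_ofLp _).comp b.measurePreserving_repr
  · simp [b.repr_apply_apply, hb 0 rfl, real_inner_comm]
  · rw [← b.repr.norm_map, EuclideanSpace.real_norm_sq_eq, EuclideanSpace.real_norm_sq_eq,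
      Fin.sum_univ_succ]
    simp [Fin.tail]

theorem volume_closedBall_inter_inner_mem {m : ℕ} (hE : finrank ℝ E = m + 1) {θ : E}
    (hθ : ‖θ‖ = 1) {A : Set ℝ} (hA : MeasurableSet A) {r : ℝ} (hr : 0 ≤ r) :
    volume (closedBall 0 r ∩ {x | ⟪x, θ⟫ ∈ A}) =
      ∫⁻ ν in A, volume {z : EuclideanSpace ℝ (Fin m) | ν ^ 2 + ‖z‖ ^ 2 ≤ r ^ 2} := by
  obtain ⟨φ, hφ, hφx⟩ := exists_measurePreserving_inner_prod hE hθ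
  set U := {p : ℝ × EuclideanSpace ℝ (Fin m) | p.1 ∈ A ∧ p.1 ^ 2 + ‖p.2‖ ^ 2 ≤ r ^ 2}
  have hU : MeasurableSet U :=
    (measurable_fst hA).inter <| measurableSet_le
      (f := fun p : ℝ × EuclideanSpace ℝ (Fin m) ↦ p.1 ^ 2 + ‖p.2‖ ^ 2) (by fun_prop) (by fun_prop)
  have hpre : closedBall 0 r ∩ {x | ⟪x, θ⟫ ∈ A} = φ ⁻¹' U := by
    ext x
    simp only [Set.mem_inter_iff, mem_closedBall_zero_iff, Set.mem_ofPred_eq, Set.mem_preimage, U,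
      ← (hφx x).1, ← (hφx x).2, sq_le_sq₀ (norm_nonneg x) hr, and_comm]
  rw [hpre, hφ.measure_preimage hU.nullMeasurableSet, Measure.volume_eq_prod,
    Measure.prod_apply hU, ← lintegral_indicator hA]
  congr 1 with ν
  by_cases hν : ν ∈ A <;> simp [U, hν]

theorem cond_closedBall_inner_mem_eq_lintegral {m : ℕ} (hE : finrank ℝ E = m + 1) {θ : E}
    (hθ : ‖θ‖ = 1) {a : ℝ} (ha : 0 < a) {A : Set ℝ} (hA : MeasurableSet A) :
    volume[|closedBall (0 : E) a] {x | ⟪x, θ⟫ ∈ A} =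
      ∫⁻ ν in A, ENNReal.ofReal (ballMarginalDensity m a ν) := by
  have hB : volume (closedBall (0 : E) a) =
      ENNReal.ofReal (a ^ (m + 1) * unitBallVolume (m + 1)) := by
    rw [volume_closedBall_eq_ofReal _ ha.le, hE]
  have hB0 : volume (closedBall (0 : E) a) ≠ 0 := (measure_closedBall_pos _ _ ha).ne'
  have hBtop : volume (closedBall (0 : E) a) ≠ ⊤ := measure_closedBall_lt_top.ne
  simp_rw [cond_apply measurableSet_closedBall,
    volume_closedBall_inter_inner_mem hE hθ hA ha.le, volume_slice_eq_mul_ballMarginalDensity m ha,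
    lintegral_const_mul' _ _ ENNReal.ofReal_ne_top, ← hB, ← mul_assoc,
    ENNReal.inv_mul_cancel hB0 hBtop, one_mul]

/-- The pushforward of the uniform distribution on the ball `B_a^d`
under `x ↦ ⟨x, θ⟩` (θ a unit vector) has the rescaled centered Beta density `f_d`. -/
theorem pushforward_uniform_ball
    (d : ℕ) (hd : 1 ≤ d) (a : ℝ) (ha : 0 < a)
    (c : ℝ)
    (hc : c = Real.Gamma ((d : ℝ) + 1) / (Real.Gamma (((d : ℝ) + 1) / 2) ^ 2 * 2 ^ d))
    (μ : Measure (EuclideanSpace ℝ (Fin d)))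
    (hμ : μ = (volume (Metric.closedBall (0 : EuclideanSpace ℝ (Fin d)) a))⁻¹ •
        volume.restrict (Metric.closedBall (0 : EuclideanSpace ℝ (Fin d)) a))
    (θ : EuclideanSpace ℝ (Fin d)) (hθ : ‖θ‖ = 1) :
    ∀ A : Set ℝ, MeasurableSet A →
      μ {x | ⟪x, θ⟫ ∈ A} =
        ENNReal.ofReal (∫ ν in A,
          Set.indicator (Set.Icc (-a) a)
            (fun ν => c / a * (1 - ν ^ 2 / a ^ 2) ^ (((d : ℝ) - 1) / 2)) ν) := by
  intro A hA
  obtain ⟨m, rfl⟩ : ∃ m, d = m + 1 := ⟨d - 1, by omega⟩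
  have hdensity : (Set.Icc (-a) a).indicator
      (fun ν => c / a * (1 - ν ^ 2 / a ^ 2) ^ ((((m + 1 : ℕ) : ℝ) - 1) / 2)) =
      ballMarginalDensity m a := by
    rw [hc, ← unitBallVolume_div_unitBallVolume_succ, ballMarginalDensity,
      show (((m + 1 : ℕ) : ℝ) - 1) / 2 = m / 2 by push_cast; ring]
  have hμ_cond : μ = volume[|closedBall 0 a] := hμ
  have : IsProbabilityMeasure μ := hμ_cond ▸ cond_isProbabilityMeasure_of_finite
    (measure_closedBall_pos _ _ ha).ne' measure_closedBall_lt_top.ne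
  have hμA := hμ_cond ▸ cond_closedBall_inner_mem_eq_lintegral finrank_euclideanSpace_fin hθ ha hA
  rw [hdensity, integral_eq_lintegral_of_nonneg_ae (ae_of_all _ (ballMarginalDensity_nonneg m a))
    (measurable_ballMarginalDensity m a).aestronglyMeasurable, ← hμA,
    ENNReal.ofReal_toReal (measure_ne_top μ _)]
end

section
/- Let d ≥ 1 be an integer, a > 0, 0 < c_f ≤ C_f, and let X be a random vector in ℝ^d whose law has a Lebesgue density f satisfying f(x) = 0 for ‖x‖ > a and c_f/V ≤ f(x) ≤ C_f/V for ‖x‖ ≤ a, where V is the Lebesgue measure of the ball B_a^d. Then for every unit vector θ ∈ ℝ^d, the law of ⟨X, θ⟩ has a Lebesgue density g on ℝ satisfying c_f · f_d(ν) ≤ g(ν) ≤ C_f · f_d(ν) for Lebesgue-almost every ν ∈ ℝ (in particular g vanishes a.e. outside [−a, a]). -/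
/-!
Rotate θ to the first coordinate vector. By Fubini, for a Borel set `s ⊆ ℝ` the part of the
ball `B_a^d` where `⟨x, θ⟩ ∈ s` has volume `∫_s vol(B^{d-1}_{√(a² - ν²)}) dν`, and by Legendre's
duplication formula `vol(B^{d-1}_{√(a² - ν²)}) = V f_d(ν)`. Sandwiching the density of `X` between
`c_f / V` and `C_f / V` on the ball therefore sandwiches the law of `⟨X, θ⟩` between `c_f f_d dν`
and `C_f f_d dν`, and its Radon–Nikodym derivative with respect to Lebesgue measure inherits both
bounds.
-/

open MeasureTheory Set Real Metric
open scoped ENNReal RealInnerProductSpace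

namespace MeasureTheory

variable {α : Type*} [MeasurableSpace α]

theorem withDensity_apply_le_const_mul_inter (μ : Measure α) {f : α → ℝ≥0∞} {K s : Set α}
    {C : ℝ≥0∞} (hK : MeasurableSet K) (hs : MeasurableSet s) (hfK : ∀ x ∈ K, f x ≤ C)
    (hfKc : ∀ x ∉ K, f x = 0) : μ.withDensity f s ≤ C * μ (s ∩ K) := by
  have hf : f ≤ K.indicator fun _ => C := fun x => by
    by_cases hx : x ∈ K
    · simpa [hx] using hfK x hx
    · simp [hx, hfKc x hx]
  calc μ.withDensity f s ≤ ∫⁻ x in s, K.indicator (fun _ => C) x ∂μ :=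
        (withDensity_apply f hs).trans_le (lintegral_mono hf)
    _ = C * μ (s ∩ K) := by
        rw [lintegral_indicator_const hK, Measure.restrict_apply hK, inter_comm]

theorem const_mul_inter_le_withDensity_apply (μ : Measure α) {f : α → ℝ≥0∞} {K s : Set α}
    {C : ℝ≥0∞} (hK : MeasurableSet K) (hs : MeasurableSet s) (hfK : ∀ x ∈ K, C ≤ f x) :
    C * μ (s ∩ K) ≤ μ.withDensity f s := by
  have hf : (K.indicator fun _ => C) ≤ f := fun x => by
    by_cases hx : x ∈ K
    · simpa [hx] using hfK x hx
    · simp [hx]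
  calc C * μ (s ∩ K) = ∫⁻ x in s, K.indicator (fun _ => C) x ∂μ := by
        rw [lintegral_indicator_const hK, Measure.restrict_apply hK, inter_comm]
    _ ≤ μ.withDensity f s := (lintegral_mono hf).trans_eq (withDensity_apply f hs).symm

theorem exists_density_of_setLIntegral_le_of_le_setLIntegral {μ ν : Measure α} [SigmaFinite ν]
    {l u : α → ℝ} (hl : Measurable l) (hu : 0 ≤ u)
    (hlμ : ∀ s, MeasurableSet s → ∫⁻ x in s, ENNReal.ofReal (l x) ∂ν ≤ μ s)
    (hμu : ∀ s, MeasurableSet s → μ s ≤ ∫⁻ x in s, ENNReal.ofReal (u x) ∂ν) :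
    ∃ g : α → ℝ, μ = ν.withDensity (fun x => ENNReal.ofReal (g x)) ∧
      ∀ᵐ x ∂ν, l x ≤ g x ∧ g x ≤ u x := by
  have hle : μ ≤ ν.withDensity fun x => ENNReal.ofReal (u x) :=
    Measure.le_iff.2 fun s hs => (hμu s hs).trans_eq (withDensity_apply _ hs).symm
  have : SigmaFinite μ := Measure.sigmaFinite_of_le _ hle
  have hac : μ ≪ ν :=
    (Measure.absolutelyContinuous_of_le hle).trans (withDensity_absolutelyContinuous _ _)
  have hlower : (fun x => ENNReal.ofReal (l x)) ≤ᵐ[ν] μ.rnDeriv ν :=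
    ae_le_of_forall_setLIntegral_le_of_sigmaFinite hl.ennreal_ofReal fun s hs _ =>
      (hlμ s hs).trans_eq (Measure.setLIntegral_rnDeriv hac s).symm
  have hupper : μ.rnDeriv ν ≤ᵐ[ν] fun x => ENNReal.ofReal (u x) :=
    ae_le_of_forall_setLIntegral_le_of_sigmaFinite (Measure.measurable_rnDeriv μ ν) fun s hs _ =>
      (Measure.setLIntegral_rnDeriv_le s).trans (hμu s hs)
  have hfinite := Measure.rnDeriv_lt_top μ ν
  refine ⟨fun x => (μ.rnDeriv ν x).toReal, ?_, ?_⟩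
  · conv_lhs => rw [← Measure.withDensity_rnDeriv_eq μ ν hac]
    refine withDensity_congr_ae ?_
    filter_upwards [hfinite] with x hx
    exact (ENNReal.ofReal_toReal hx.ne).symm
  · filter_upwards [hlower, hupper, hfinite] with x hlx hux hx
    exact ⟨(ENNReal.ofReal_le_iff_le_toReal hx.ne).1 hlx, ENNReal.toReal_le_of_le_ofReal (hu x) hux⟩

end MeasureTheory

noncomputable def betaNormalizer (d : ℕ) : ℝ :=
  Gamma ((d : ℝ) + 1) / (Gamma (((d : ℝ) + 1) / 2) ^ 2 * 2 ^ d)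

noncomputable def centeredBetaDensity (d : ℕ) (a : ℝ) : ℝ → ℝ :=
  (Icc (-a) a).indicator fun ν => betaNormalizer d / a * (1 - ν ^ 2 / a ^ 2) ^ (((d : ℝ) - 1) / 2)

theorem betaNormalizer_eq (d : ℕ) :
    betaNormalizer d = Gamma ((d : ℝ) / 2 + 1) / (√π * Gamma (((d : ℝ) + 1) / 2)) := by
  have h := Gamma_mul_Gamma_add_half (((d : ℝ) + 1) / 2)
  rw [show 2 * (((d : ℝ) + 1) / 2) = (d : ℝ) + 1 by ring,
    show ((d : ℝ) + 1) / 2 + 1 / 2 = (d : ℝ) / 2 + 1 by ring,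
    show (1 : ℝ) - ((d : ℝ) + 1) = -(d : ℝ) by ring, rpow_neg zero_le_two, rpow_natCast] at h
  have : Gamma (((d : ℝ) + 1) / 2) ≠ 0 := (Gamma_pos_of_pos (by positivity)).ne'
  rw [betaNormalizer]
  field_simp
  field_simp at h
  linear_combination -h

theorem betaNormalizer_nonneg (d : ℕ) : 0 ≤ betaNormalizer d := by
  have := Gamma_pos_of_pos (show 0 < (d : ℝ) + 1 by positivity)
  unfold betaNormalizer
  positivity

theorem centeredBetaDensity_nonneg (d : ℕ) (a ν : ℝ) : 0 ≤ centeredBetaDensity d a ν := by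
  unfold centeredBetaDensity
  by_cases hν : ν ∈ Icc (-a) a
  · rw [indicator_of_mem hν]
    have ha : 0 ≤ a := by linarith [hν.1, hν.2]
    have : ν ^ 2 / a ^ 2 ≤ 1 := div_le_one_of_le₀ (sq_le_sq' hν.1 hν.2) (sq_nonneg a)
    have := betaNormalizer_nonneg d
    exact mul_nonneg (div_nonneg this ha) (rpow_nonneg (by linarith) _)
  · rw [indicator_of_notMem hν]

theorem measurable_centeredBetaDensity (d : ℕ) (a : ℝ) : Measurable (centeredBetaDensity d a) :=
  Measurable.indicator (by fun_prop) measurableSet_Icc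

/-- Unlike `EuclideanSpace.volume_closedBall`, this also covers the empty index type. -/
theorem EuclideanSpace.volume_closedBall_of_nonneg {ι : Type*} [Fintype ι]
    (x : EuclideanSpace ℝ ι) {r : ℝ} (hr : 0 ≤ r) :
    volume (closedBall x r) = ENNReal.ofReal
      (r ^ Fintype.card ι * (√π ^ Fintype.card ι / Gamma (Fintype.card ι / 2 + 1))) := by
  cases isEmpty_or_nonempty ι
  · have : closedBall x r = univ := eq_univ_of_forall fun y => by
      simp [Subsingleton.elim y x, hr]
    simp [this, volume_euclideanSpace_eq_dirac]
  · rw [EuclideanSpace.volume_closedBall, ← ENNReal.ofReal_pow hr,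
      ← ENNReal.ofReal_mul (by positivity)]

theorem volume_closedBall_sqrt_sq_sub_sq {n : ℕ} {a ν : ℝ} (ha : 0 < a) (hν : ν ∈ Icc (-a) a) :
    volume (closedBall (0 : EuclideanSpace ℝ (Fin n)) √(a ^ 2 - ν ^ 2)) =
      ENNReal.ofReal ((volume (closedBall (0 : EuclideanSpace ℝ (Fin (n + 1))) a)).toReal *
        centeredBetaDensity (n + 1) a ν) := by
  have hνa : 0 ≤ a ^ 2 - ν ^ 2 := sub_nonneg.2 (sq_le_sq' hν.1 hν.2)
  rw [EuclideanSpace.volume_closedBall_of_nonneg _ (sqrt_nonneg _),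
    EuclideanSpace.volume_closedBall_of_nonneg _ ha.le, ENNReal.toReal_ofReal (by positivity),
    centeredBetaDensity, indicator_of_mem hν, betaNormalizer_eq]
  congr 1
  simp only [Fintype.card_fin]
  push_cast
  have hpow : √(a ^ 2 - ν ^ 2) ^ n = a ^ n * (1 - ν ^ 2 / a ^ 2) ^ ((n : ℝ) / 2) := by
    have h1 : 0 ≤ 1 - ν ^ 2 / a ^ 2 := by
      rw [one_sub_div (by positivity)]; positivity
    rw [← rpow_natCast, sqrt_eq_rpow, ← rpow_mul hνa,
      show a ^ 2 - ν ^ 2 = a ^ 2 * (1 - ν ^ 2 / a ^ 2) by field_simp, mul_rpow (by positivity) h1,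
      ← rpow_natCast a 2, ← rpow_mul ha.le, show (2 : ℕ) * (1 / 2 * (n : ℝ)) = n by push_cast; ring, rpow_natCast,
      show 1 / 2 * (n : ℝ) = n / 2 by ring]
  rw [show ((n : ℝ) + 1 - 1) / 2 = n / 2 by ring, show ((n : ℝ) + 1 + 1) / 2 = n / 2 + 1 by ring,
    hpow]
  have : Gamma ((n : ℝ) / 2 + 1) ≠ 0 := (Gamma_pos_of_pos (by positivity)).ne'
  have : Gamma (((n : ℝ) + 1) / 2 + 1) ≠ 0 := (Gamma_pos_of_pos (by positivity)).ne'
  field_simp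
  ring

theorem EuclideanSpace.measurePreserving_headTail (n : ℕ) :
    MeasurePreserving (fun x : EuclideanSpace ℝ (Fin (n + 1)) =>
      (x 0, WithLp.toLp 2 (Fin.removeNth 0 (WithLp.ofLp x)))) :=
  ((MeasurePreserving.id volume).prod (PiLp.volume_preserving_toLp (Fin n))).comp
    ((volume_preserving_piFinSuccAbove (fun _ => ℝ) 0).comp (PiLp.volume_preserving_ofLp _))

theorem EuclideanSpace.norm_sq_eq_sq_add_norm_removeNth_sq {n : ℕ}
    (x : EuclideanSpace ℝ (Fin (n + 1))) :
    ‖x‖ ^ 2 = x 0 ^ 2 + ‖WithLp.toLp 2 (Fin.removeNth 0 (WithLp.ofLp x))‖ ^ 2 := by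
  simp [EuclideanSpace.norm_sq_eq, Fin.sum_univ_succ, Fin.tail]

theorem EuclideanSpace.volume_coord_mem_inter_closedBall {n : ℕ} {s : Set ℝ}
    (hs : MeasurableSet s) {a : ℝ} (ha : 0 ≤ a) :
    volume ({x : EuclideanSpace ℝ (Fin (n + 1)) | x 0 ∈ s} ∩ closedBall 0 a) =
      ∫⁻ ν in s ∩ Icc (-a) a,
        volume (closedBall (0 : EuclideanSpace ℝ (Fin n)) √(a ^ 2 - ν ^ 2)) := by
  set S : Set (ℝ × EuclideanSpace ℝ (Fin n)) := {p | p.1 ∈ s ∧ p.1 ^ 2 + ‖p.2‖ ^ 2 ≤ a ^ 2}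
  have hS : MeasurableSet S :=
    (measurable_fst hs).inter (measurableSet_le
      (by fun_prop : Measurable fun p : ℝ × EuclideanSpace ℝ (Fin n) => p.1 ^ 2 + ‖p.2‖ ^ 2)
      measurable_const)
  have hslab : {x : EuclideanSpace ℝ (Fin (n + 1)) | x 0 ∈ s} ∩ closedBall 0 a =
      (fun x => (x 0, WithLp.toLp 2 (Fin.removeNth 0 (WithLp.ofLp x)))) ⁻¹' S := by
    ext x
    simp only [mem_inter_iff, mem_ofPred_eq, mem_closedBall_zero_iff, mem_preimage, S,
      ← norm_sq_eq_sq_add_norm_removeNth_sq, sq_le_sq₀ (norm_nonneg x) ha]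
  rw [hslab, (measurePreserving_headTail n).measure_preimage hS.nullMeasurableSet,
    Measure.volume_eq_prod, Measure.prod_apply hS,
    ← lintegral_indicator (hs.inter measurableSet_Icc)]
  congr 1 with ν
  by_cases hν : ν ∈ s ∩ Icc (-a) a
  · rw [indicator_of_mem hν]
    congr 1 with y
    have : 0 ≤ a ^ 2 - ν ^ 2 := sub_nonneg.2 (sq_le_sq' hν.2.1 hν.2.2)
    simp only [mem_preimage, mem_ofPred_eq, S, mem_closedBall_zero_iff, hν.1, true_and,
      le_sqrt (norm_nonneg y) this]
    constructor <;> intro h <;> linarith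
  · rw [indicator_of_notMem hν, measure_eq_zero_iff_ae_notMem]
    refine ae_of_all _ fun y ⟨hνs, hy⟩ => hν ⟨hνs, abs_le_of_sq_le_sq' ?_ ha⟩
    nlinarith [hy, sq_nonneg ‖y‖]

theorem volume_inner_mem_inter_closedBall_eq_coord {E : Type*} [NormedAddCommGroup E]
    [InnerProductSpace ℝ E] [FiniteDimensional ℝ E] [MeasurableSpace E] [BorelSpace E] {n : ℕ}
    (hE : Module.finrank ℝ E = n + 1) {θ : E} (hθ : ‖θ‖ = 1) (s : Set ℝ) (a : ℝ) :
    volume ({x : E | ⟪x, θ⟫ ∈ s} ∩ closedBall 0 a) =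
      volume ({y : EuclideanSpace ℝ (Fin (n + 1)) | y 0 ∈ s} ∩ closedBall 0 a) := by
  have hθ' : Orthonormal ℝ (({0} : Set (Fin (n + 1))).domRestrict fun _ => θ) :=
    ⟨fun _ => hθ, fun i j hij => (hij (Subsingleton.elim i j)).elim⟩
  obtain ⟨b, hb⟩ := hθ'.exists_orthonormalBasis_extension_of_card_eq (by simpa using hE)
  have hslab : {x : E | ⟪x, θ⟫ ∈ s} ∩ closedBall 0 a =
      b.measurableEquiv ⁻¹' ({y | y 0 ∈ s} ∩ closedBall 0 a) := by
    ext x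
    simp [OrthonormalBasis.measurableEquiv, ← hb 0 rfl, OrthonormalBasis.repr_apply_apply,
      real_inner_comm]
  rw [hslab, b.measurePreserving_measurableEquiv.measure_preimage_equiv]

theorem volume_inner_mem_inter_closedBall {n : ℕ} {a : ℝ} (ha : 0 < a)
    {θ : EuclideanSpace ℝ (Fin (n + 1))} (hθ : ‖θ‖ = 1) {s : Set ℝ} (hs : MeasurableSet s) :
    volume ({x : EuclideanSpace ℝ (Fin (n + 1)) | ⟪x, θ⟫ ∈ s} ∩ closedBall 0 a) =
      ∫⁻ ν in s, ENNReal.ofReal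
        ((volume (closedBall (0 : EuclideanSpace ℝ (Fin (n + 1))) a)).toReal *
          centeredBetaDensity (n + 1) a ν) := by
  rw [volume_inner_mem_inter_closedBall_eq_coord finrank_euclideanSpace_fin hθ,
    EuclideanSpace.volume_coord_mem_inter_closedBall hs ha.le, inter_comm,
    ← setLIntegral_indicator measurableSet_Icc]
  congr 1 with ν
  by_cases hν : ν ∈ Icc (-a) a
  · rw [indicator_of_mem hν, volume_closedBall_sqrt_sq_sub_sq ha hν]
  · simp [hν, centeredBetaDensity]

theorem setLIntegral_ofReal_mul_centeredBetaDensity {n : ℕ} {a C : ℝ} (ha : 0 < a) (hC : 0 ≤ C)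
    {θ : EuclideanSpace ℝ (Fin (n + 1))} (hθ : ‖θ‖ = 1) {s : Set ℝ} (hs : MeasurableSet s) :
    ∫⁻ ν in s, ENNReal.ofReal (C * centeredBetaDensity (n + 1) a ν) =
      ENNReal.ofReal (C / (volume (closedBall (0 : EuclideanSpace ℝ (Fin (n + 1))) a)).toReal) *
        volume ({x : EuclideanSpace ℝ (Fin (n + 1)) | ⟪x, θ⟫ ∈ s} ∩ closedBall 0 a) := by
  set V := (volume (closedBall (0 : EuclideanSpace ℝ (Fin (n + 1))) a)).toReal
  have hV : 0 < V :=
    ENNReal.toReal_pos (measure_closedBall_pos volume 0 ha).ne' measure_closedBall_lt_top.ne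
  rw [volume_inner_mem_inter_closedBall ha hθ hs,
    ← lintegral_const_mul _ ((measurable_centeredBetaDensity _ _).const_mul V).ennreal_ofReal]
  congr 1 with ν
  rw [← ENNReal.ofReal_mul (div_nonneg hC hV.le)]
  congr 1
  field_simp

theorem projection_density_bounds_general
    (d : ℕ) (hd : 1 ≤ d) (a : ℝ) (ha : 0 < a)
    (cf Cf : ℝ) (hcf : 0 < cf) (hcfCf : cf ≤ Cf)
    (c : ℝ)
    (hc : c = Real.Gamma ((d : ℝ) + 1) / (Real.Gamma (((d : ℝ) + 1) / 2) ^ 2 * 2 ^ d))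
    (fd : ℝ → ℝ)
    (hfd : fd = Set.indicator (Set.Icc (-a) a)
        (fun ν => c / a * (1 - ν ^ 2 / a ^ 2) ^ (((d : ℝ) - 1) / 2)))
    (V : ℝ)
    (hV : V = (volume (Metric.closedBall (0 : EuclideanSpace ℝ (Fin d)) a)).toReal)
    (Ω : Type*) [MeasurableSpace Ω] (P : Measure Ω)
    (X : Ω → EuclideanSpace ℝ (Fin d)) (hX : Measurable X)
    (f : EuclideanSpace ℝ (Fin d) → ℝ)
    (hlaw : Measure.map X P = volume.withDensity (fun x => ENNReal.ofReal (f x)))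
    (hf0 : ∀ x, a < ‖x‖ → f x = 0)
    (hfb : ∀ x, ‖x‖ ≤ a → cf / V ≤ f x ∧ f x ≤ Cf / V)
    (θ : EuclideanSpace ℝ (Fin d)) (hθ : ‖θ‖ = 1) :
    ∃ g : ℝ → ℝ,
      Measure.map (fun ω => ⟪X ω, θ⟫) P =
          volume.withDensity (fun ν => ENNReal.ofReal (g ν)) ∧
        ∀ᵐ ν : ℝ, cf * fd ν ≤ g ν ∧ g ν ≤ Cf * fd ν := by
  obtain ⟨n, rfl⟩ : ∃ n, d = n + 1 := ⟨d - 1, by omega⟩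
  obtain rfl : fd = centeredBetaDensity (n + 1) a := by subst hc hfd; rfl
  subst hV
  have hinner : Measurable fun x : EuclideanSpace ℝ (Fin (n + 1)) => ⟪x, θ⟫ := by fun_prop
  have hlaw_inner : Measure.map (fun ω => ⟪X ω, θ⟫) P =
      (volume.withDensity fun x => ENNReal.ofReal (f x)).map fun x => ⟪x, θ⟫ := by
    rw [← hlaw, Measure.map_map hinner hX]
    rfl
  rw [hlaw_inner]
  refine exists_density_of_setLIntegral_le_of_le_setLIntegral
    ((measurable_centeredBetaDensity _ _).const_mul cf)
    (fun ν => mul_nonneg (hcf.le.trans hcfCf) (centeredBetaDensity_nonneg _ _ ν))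
    (fun s hs => ?_) (fun s hs => ?_)
  · rw [setLIntegral_ofReal_mul_centeredBetaDensity ha hcf.le hθ hs, Measure.map_apply hinner hs]
    exact const_mul_inter_le_withDensity_apply _ measurableSet_closedBall (hinner hs)
      fun x hx => ENNReal.ofReal_le_ofReal (hfb x (mem_closedBall_zero_iff.1 hx)).1
  · rw [setLIntegral_ofReal_mul_centeredBetaDensity ha (hcf.le.trans hcfCf) hθ hs,
      Measure.map_apply hinner hs]
    exact withDensity_apply_le_const_mul_inter _ measurableSet_closedBall (hinner hs)
      (fun x hx => ENNReal.ofReal_le_ofReal (hfb x (mem_closedBall_zero_iff.1 hx)).2)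
      fun x hx => by rw [hf0 x (by simpa using hx), ENNReal.ofReal_zero]

/-- If the law of `X` has a density bounded between `c_f/V` and `C_f/V`
on the ball `B_a^d` (and vanishing outside), then for every unit vector `θ` the law of
`⟨X, θ⟩` has a Lebesgue density `g` with `c_f·f_d ≤ g ≤ C_f·f_d` almost everywhere. -/
theorem projection_density_bounds
    (d : ℕ) (hd : 1 ≤ d) (a : ℝ) (ha : 0 < a)
    (cf Cf : ℝ) (hcf : 0 < cf) (hcfCf : cf ≤ Cf)
    (c : ℝ)
    (hc : c = Real.Gamma ((d : ℝ) + 1) / (Real.Gamma (((d : ℝ) + 1) / 2) ^ 2 * 2 ^ d))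
    (fd : ℝ → ℝ)
    (hfd : fd = Set.indicator (Set.Icc (-a) a)
        (fun ν => c / a * (1 - ν ^ 2 / a ^ 2) ^ (((d : ℝ) - 1) / 2)))
    (V : ℝ)
    (hV : V = (volume (Metric.closedBall (0 : EuclideanSpace ℝ (Fin d)) a)).toReal)
    (Ω : Type*) [MeasurableSpace Ω] (P : Measure Ω) [IsProbabilityMeasure P]
    (X : Ω → EuclideanSpace ℝ (Fin d)) (hX : Measurable X)
    (f : EuclideanSpace ℝ (Fin d) → ℝ)
    (hlaw : Measure.map X P = volume.withDensity (fun x => ENNReal.ofReal (f x)))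
    (hf0 : ∀ x, a < ‖x‖ → f x = 0)
    (hfb : ∀ x, ‖x‖ ≤ a → cf / V ≤ f x ∧ f x ≤ Cf / V)
    (θ : EuclideanSpace ℝ (Fin d)) (hθ : ‖θ‖ = 1) :
    ∃ g : ℝ → ℝ,
      Measure.map (fun ω => ⟪X ω, θ⟫) P =
          volume.withDensity (fun ν => ENNReal.ofReal (g ν)) ∧
        ∀ᵐ ν : ℝ, cf * fd ν ≤ g ν ∧ g ν ≤ Cf * fd ν :=
  projection_density_bounds_general d hd a ha cf Cf hcf hcfCf c hc fd hfd V hV Ω P X hX f hlaw hf0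
    hfb θ hθ
end

section
/- Let p be a sampling design on the finite population U = {1,…,N} with inclusion probabilities satisfying π_i ≥ λ for all i ∈ U, where λ > 0, and let Δ = max_{i≠j} |π_ij − π_i π_j|. Then for any real numbers d_1,…,d_N, Σ_{i∈U} Σ_{j∈U} (π_ij − π_i π_j)(d_i/π_i)(d_j/π_j) ≤ (1/λ + NΔ/λ²) · Σ_{i∈U} d_i². In particular, Var_p( Σ_{i∈s} d_i/π_i ) ≤ (1/λ + NΔ/λ²) Σ_{i∈U} d_i². -/
/-!
Writing `a i = d i / π i`, the design variance of the Horvitz–Thompson sum `∑_{i ∈ s} a i` is the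
quadratic form `∑ᵢ ∑ⱼ (π_ij - π_i π_j) a_i a_j`, because `E[I_i] = π_i` and `E[I_i I_j] = π_ij`.
Its diagonal entries `π_i - π_i²` are at most `π_i`, giving `∑ d_i² / π_i ≤ ∑ d_i² / λ`; the
off-diagonal part is at most `Δ (∑ |a_i|)² ≤ N Δ ∑ a_i² ≤ N Δ / λ² ∑ d_i²` by Cauchy–Schwarz.
-/

open Finset

section QuadraticForm

variable {ι : Type*} [Fintype ι]

theorem sum_sum_mul_le_sum_diag_add (C : ι → ι → ℝ) {Δ : ℝ} (hΔ0 : 0 ≤ Δ)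
    (hoff : ∀ i j, i ≠ j → |C i j| ≤ Δ) (a : ι → ℝ) :
    ∑ i, ∑ j, C i j * a i * a j
      ≤ ∑ i, C i i * a i ^ 2 + Fintype.card ι * Δ * ∑ i, a i ^ 2 := by
  classical
  have hterm : ∀ i j, C i j * a i * a j
      ≤ (if i = j then C i i * a i ^ 2 else 0) + Δ * (|a i| * |a j|) := by
    intro i j
    by_cases hij : i = j
    · subst hij
      rw [if_pos rfl, mul_assoc, ← sq]
      exact le_add_of_nonneg_right (by positivity)
    · rw [if_neg hij, zero_add]
      calc C i j * a i * a j ≤ |C i j * a i * a j| := le_abs_self _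
        _ = |C i j| * (|a i| * |a j|) := by rw [abs_mul, abs_mul, mul_assoc]
        _ ≤ Δ * (|a i| * |a j|) := by gcongr; exact hoff i j hij
  have hcauchy : (∑ i, |a i|) ^ 2 ≤ Fintype.card ι * ∑ i, a i ^ 2 := by
    simpa only [sq_abs, card_univ] using
      sq_sum_le_card_mul_sum_sq (s := univ) (f := fun i => |a i|)
  calc ∑ i, ∑ j, C i j * a i * a j
      ≤ ∑ i, ∑ j, ((if i = j then C i i * a i ^ 2 else 0) + Δ * (|a i| * |a j|)) :=
        sum_le_sum fun i _ => sum_le_sum fun j _ => hterm i j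
    _ = ∑ i, C i i * a i ^ 2 + Δ * (∑ i, |a i|) ^ 2 := by
        simp only [sum_add_distrib, sum_ite_eq, mem_univ, if_true, ← mul_sum, sq,
          sum_mul_sum]
    _ ≤ ∑ i, C i i * a i ^ 2 + Fintype.card ι * Δ * ∑ i, a i ^ 2 := by
        nlinarith [mul_le_mul_of_nonneg_left hcauchy hΔ0]

theorem sum_sum_mul_div_mul_div_le (C : ι → ι → ℝ) (π : ι → ℝ) {lam Δ : ℝ} (hlam : 0 < lam)
    (hπlam : ∀ i, lam ≤ π i) (hdiag : ∀ i, C i i ≤ π i) (hΔ0 : 0 ≤ Δ)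
    (hoff : ∀ i j, i ≠ j → |C i j| ≤ Δ) (d : ι → ℝ) :
    ∑ i, ∑ j, C i j * (d i / π i) * (d j / π j)
      ≤ (1 / lam + Fintype.card ι * Δ / lam ^ 2) * ∑ i, d i ^ 2 := by
  have hπ : ∀ i, 0 < π i := fun i => hlam.trans_le (hπlam i)
  have hdiag' : ∀ i, C i i * (d i / π i) ^ 2 ≤ d i ^ 2 / lam := fun i =>
    calc C i i * (d i / π i) ^ 2 ≤ π i * (d i / π i) ^ 2 := by gcongr; exact hdiag i
      _ = d i ^ 2 / π i := by field_simp [(hπ i).ne']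
      _ ≤ d i ^ 2 / lam := by gcongr; exact hπlam i
  have hsq : ∀ i, (d i / π i) ^ 2 ≤ d i ^ 2 / lam ^ 2 := fun i => by
    rw [div_pow]; gcongr; exact hπlam i
  calc ∑ i, ∑ j, C i j * (d i / π i) * (d j / π j)
      ≤ ∑ i, C i i * (d i / π i) ^ 2 + Fintype.card ι * Δ * ∑ i, (d i / π i) ^ 2 :=
        sum_sum_mul_le_sum_diag_add C hΔ0 hoff _
    _ ≤ ∑ i, d i ^ 2 / lam + Fintype.card ι * Δ * ∑ i, d i ^ 2 / lam ^ 2 := by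
        gcongr with i
        · exact hdiag' i
        · exact hsq i
    _ = (1 / lam + Fintype.card ι * Δ / lam ^ 2) * ∑ i, d i ^ 2 := by
        simp only [← sum_div]; ring

end QuadraticForm

theorem sum_mul_sub_sum_mul_sq {α : Type*} [Fintype α] {p : α → ℝ} (hsum : ∑ a, p a = 1)
    (Y : α → ℝ) :
    ∑ a, p a * (Y a - ∑ b, p b * Y b) ^ 2 = ∑ a, p a * Y a ^ 2 - (∑ a, p a * Y a) ^ 2 := by
  set μ := ∑ b, p b * Y b
  calc ∑ a, p a * (Y a - μ) ^ 2 = ∑ a, (p a * Y a ^ 2 - 2 * μ * (p a * Y a) + μ ^ 2 * p a) :=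
        sum_congr rfl fun a _ => by ring
    _ = ∑ a, p a * Y a ^ 2 - 2 * μ * μ + μ ^ 2 * ∑ a, p a := by
        rw [sum_add_distrib, sum_sub_distrib, ← mul_sum, ← mul_sum]
    _ = ∑ a, p a * Y a ^ 2 - μ ^ 2 := by rw [hsum]; ring

section SamplingDesign

variable {ι : Type*} [Fintype ι] [DecidableEq ι] (p : Finset ι → ℝ)

def inclusionProb (i : ι) : ℝ :=
  ∑ s : Finset ι, if i ∈ s then p s else 0

def jointInclusionProb (i j : ι) : ℝ :=
  ∑ s : Finset ι, if i ∈ s ∧ j ∈ s then p s else 0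

theorem jointInclusionProb_self (i : ι) : jointInclusionProb p i i = inclusionProb p i := by
  simp only [jointInclusionProb, inclusionProb, and_self]

theorem jointInclusionProb_self_sub_le (i : ι) :
    jointInclusionProb p i i - inclusionProb p i * inclusionProb p i ≤ inclusionProb p i := by
  rw [jointInclusionProb_self]
  nlinarith [mul_self_nonneg (inclusionProb p i)]

theorem sum_mul_sum_mem_eq_sum_inclusionProb_mul (x : ι → ℝ) :
    ∑ s, p s * ∑ i ∈ s, x i = ∑ i, inclusionProb p i * x i := by
  simp_rw [inclusionProb, sum_mul, ite_mul, zero_mul, mul_sum, ← sum_filter]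
  exact sum_comm' (by simp)

theorem sum_mul_sq_sum_mem_eq_sum_jointInclusionProb_mul (x : ι → ℝ) :
    ∑ s, p s * (∑ i ∈ s, x i) ^ 2 = ∑ i, ∑ j, jointInclusionProb p i j * x i * x j := by
  simp_rw [jointInclusionProb, sum_mul, ite_mul, zero_mul, ← sum_filter, sq, sum_mul_sum,
    mul_sum, ← mul_assoc]
  calc ∑ s, ∑ i ∈ s, ∑ j ∈ s, p s * x i * x j
      = ∑ i, ∑ s with i ∈ s, ∑ j ∈ s, p s * x i * x j := sum_comm' (by simp)
    _ = ∑ i, ∑ j, ∑ s with i ∈ s ∧ j ∈ s, p s * x i * x j :=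
        sum_congr rfl fun i _ => sum_comm' (by simp)

theorem sum_mul_sum_mem_sub_mean_sq_eq (hsum : ∑ s, p s = 1) (x : ι → ℝ) :
    ∑ s, p s * (∑ i ∈ s, x i - ∑ s', p s' * ∑ i ∈ s', x i) ^ 2
      = ∑ i, ∑ j, (jointInclusionProb p i j - inclusionProb p i * inclusionProb p j)
          * x i * x j := by
  have hmean_sq : (∑ i, inclusionProb p i * x i) ^ 2
      = ∑ i, ∑ j, inclusionProb p i * inclusionProb p j * x i * x j := by
    rw [sq, sum_mul_sum]
    exact sum_congr rfl fun i _ => sum_congr rfl fun j _ => by ring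
  rw [sum_mul_sub_sum_mul_sq hsum, sum_mul_sq_sum_mem_eq_sum_jointInclusionProb_mul,
    sum_mul_sum_mem_eq_sum_inclusionProb_mul, hmean_sq]
  simp only [sub_mul, sum_sub_distrib]

end SamplingDesign

theorem ht_variance_bound_general
    (N : ℕ) (p : Finset (Fin N) → ℝ)
    (hsum : ∑ s : Finset (Fin N), p s = 1)
    (π : Fin N → ℝ) (ππ : Fin N → Fin N → ℝ)
    (hπ : ∀ i, π i = ∑ s : Finset (Fin N), if i ∈ s then p s else 0)
    (hππ : ∀ i j, ππ i j = ∑ s : Finset (Fin N), if i ∈ s ∧ j ∈ s then p s else 0)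
    (lam : ℝ) (hlam : 0 < lam) (hπlam : ∀ i, lam ≤ π i)
    (Δ : ℝ) (hΔ0 : 0 ≤ Δ) (hΔ : ∀ i j, i ≠ j → |ππ i j - π i * π j| ≤ Δ)
    (d : Fin N → ℝ) :
    (∑ i : Fin N, ∑ j : Fin N, (ππ i j - π i * π j) * (d i / π i) * (d j / π j)
        ≤ (1 / lam + N * Δ / lam ^ 2) * ∑ i : Fin N, d i ^ 2) ∧
      ∑ s : Finset (Fin N),
          p s * ((∑ i ∈ s, d i / π i) - ∑ s' : Finset (Fin N), p s' * ∑ i ∈ s', d i / π i) ^ 2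
        ≤ (1 / lam + N * Δ / lam ^ 2) * ∑ i : Fin N, d i ^ 2 := by
  obtain rfl : π = inclusionProb p := funext hπ
  obtain rfl : ππ = jointInclusionProb p := funext fun i => funext (hππ i)
  have hquad := sum_sum_mul_div_mul_div_le
    (fun i j => jointInclusionProb p i j - inclusionProb p i * inclusionProb p j)
    (inclusionProb p) hlam hπlam (jointInclusionProb_self_sub_le p) hΔ0 hΔ d
  rw [Fintype.card_fin] at hquad
  exact ⟨hquad, (sum_mul_sum_mem_sub_mean_sq_eq p hsum _).trans_le hquad⟩

/-- Bound on the Horvitz–Thompson variance quadratic form: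
if `π_i ≥ λ > 0` and `|π_ij − π_i π_j| ≤ Δ` for `i ≠ j`, then
`Σ_i Σ_j (π_ij − π_i π_j)(d_i/π_i)(d_j/π_j) ≤ (1/λ + NΔ/λ²) Σ_i d_i²`, and in
particular the design variance of `Σ_{i∈s} d_i/π_i` obeys the same bound. -/
theorem ht_variance_bound
    (N : ℕ) (p : Finset (Fin N) → ℝ)
    (hp : ∀ s, 0 ≤ p s) (hsum : ∑ s : Finset (Fin N), p s = 1)
    (π : Fin N → ℝ) (ππ : Fin N → Fin N → ℝ)
    (hπ : ∀ i, π i = ∑ s : Finset (Fin N), if i ∈ s then p s else 0)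
    (hππ : ∀ i j, ππ i j = ∑ s : Finset (Fin N), if i ∈ s ∧ j ∈ s then p s else 0)
    (lam : ℝ) (hlam : 0 < lam) (hπlam : ∀ i, lam ≤ π i)
    (Δ : ℝ) (hΔ0 : 0 ≤ Δ) (hΔ : ∀ i j, i ≠ j → |ππ i j - π i * π j| ≤ Δ)
    (d : Fin N → ℝ) :
    (∑ i : Fin N, ∑ j : Fin N, (ππ i j - π i * π j) * (d i / π i) * (d j / π j)
        ≤ (1 / lam + N * Δ / lam ^ 2) * ∑ i : Fin N, d i ^ 2) ∧
      ∑ s : Finset (Fin N),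
          p s * ((∑ i ∈ s, d i / π i) - ∑ s' : Finset (Fin N), p s' * ∑ i ∈ s', d i / π i) ^ 2
        ≤ (1 / lam + N * Δ / lam ^ 2) * ∑ i : Fin N, d i ^ 2 :=
  ht_variance_bound_general N p hsum π ππ hπ hππ lam hlam hπlam Δ hΔ0 hΔ d
end
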